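/- arXiv:1211.1912 — 6 statements merged into one kernel-verified Lean document; each statement's English description precedes it below -/
import Mathlib

section
/- Fix a positive integer n, a real number ε > 0 with a, b real with 0 ≤ a < b, and a family of probability measures μ_θ on ℤ for θ ∈ [a,b] such that for all integers k ≤ l, the map θ ↦ μ_θ({m ∈ ℤ : k ≤ m ≤ l}) is continuous and unimodal on [a,b]. Define the coverage probability C(θ) = μ_θ({m ∈ ℤ : |m/n − θ| < ε}). Then the infimum of C over [a,b] is attained, and it is attained at some point of the finite set S = {a, b} ∪ {ℓ/n + ε : ℓ ∈ ℤ, ℓ/n + ε ∈ (a,b)} ∪ {ℓ/n − ε : ℓ ∈ ℤ, ℓ/n − ε ∈ (a,b)}; moreover S has fewer than 2n(b−a) + 4 elements. -/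
/-!
Between two consecutive breakpoints `p < θ < q` no point `ℓ/n + ε` lies in `(p, θ]` and no point
`ℓ/n - ε` lies in `[θ, q)`, so no grid point `m/n` leaves the window `(t - ε, t + ε)` as `t` slides
from `p` or from `q` to `θ`. Hence the coverage sets at `p` and `q` are contained in the one at `θ`,
which is an integer interval `Icc k l`, and unimodality of `t ↦ μ_t (Icc k l)` gives
`C θ ≥ min (C p) (C q)`. The size bound holds because a grid `ℤ/n + c` meets `(a, b)` in fewer than
`n (b - a) + 1` points.
-/

open MeasureTheory Set

section Unimodal
variable {α β : Type*} [LinearOrder β]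

def UnimodalOn [Preorder α] (f : α → β) (a b : α) : Prop :=
  ∃ x ∈ Icc a b, MonotoneOn f (Icc a x) ∧ AntitoneOn f (Icc x b)

lemma unimodalOn_const [Preorder α] {a b : α} (hab : a ≤ b) (c : β) :
    UnimodalOn (fun _ => c) a b :=
  ⟨a, left_mem_Icc.2 hab, monotoneOn_const, antitoneOn_const⟩

lemma UnimodalOn.min_le [LinearOrder α] {f : α → β} {a b p θ q : α}
    (hf : UnimodalOn f a b) (hap : a ≤ p) (hpθ : p ≤ θ) (hθq : θ ≤ q) (hqb : q ≤ b) :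
    min (f p) (f q) ≤ f θ := by
  obtain ⟨x, -, hmono, hanti⟩ := hf
  rcases le_total θ x with hθx | hxθ
  · exact min_le_of_left_le (hmono ⟨hap, hpθ.trans hθx⟩ ⟨hap.trans hpθ, hθx⟩ hpθ)
  · exact min_le_of_right_le (hanti ⟨hxθ, hθq.trans hqb⟩ ⟨hxθ.trans hθq, hqb⟩ hθq)

end Unimodal

section OrderedField
variable {K : Type*} [Field K] [LinearOrder K] [IsStrictOrderedRing K]

lemma div_mem_Ioo_iff {x c u v : K} (hc : 0 < c) : x / c ∈ Ioo u v ↔ x ∈ Ioo (u * c) (v * c) := by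
  simp only [mem_Ioo, lt_div_iff₀ hc, div_lt_iff₀ hc]

lemma Int.ncard_Ioo_floor_ceil_lt [FloorRing K] {u v : K} (h : u ≤ v) :
    ((Ioo ⌊u⌋ ⌈v⌉ : Set ℤ).ncard : K) < v - u + 1 := by
  rw [← Finset.coe_Ioo, Set.ncard_coe_finset, Int.card_Ioo]
  have hcast : (((⌈v⌉ - ⌊u⌋ - 1).toNat : ℤ) : K) = max ((⌈v⌉ - ⌊u⌋ - 1 : ℤ) : K) 0 := by
    rw [Int.toNat_eq_max]; push_cast; rfl
  rw [← Int.cast_natCast, hcast, max_lt_iff]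
  push_cast
  constructor <;> linarith [Int.ceil_lt_add_one v, Int.sub_one_lt_floor u]

end OrderedField

def gridIoo (n : ℕ) (c a b : ℝ) : Set ℝ := {x : ℝ | ∃ ℓ : ℤ, x = (ℓ : ℝ) / n + c ∧ x ∈ Ioo a b}

section Grid
variable {n : ℕ} {c a b : ℝ}

lemma gridIoo_neg : gridIoo n (-c) a b = {x : ℝ | ∃ ℓ : ℤ, x = (ℓ : ℝ) / n - c ∧ x ∈ Ioo a b} := by
  simp only [gridIoo, sub_eq_add_neg]

lemma gridIoo_eq_image (hn : 0 < n) :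
    gridIoo n c a b = (fun ℓ : ℤ => (ℓ : ℝ) / n + c) '' Ioo ⌊(a - c) * n⌋ ⌈(b - c) * n⌉ := by
  have hn' : (0 : ℝ) < n := Nat.cast_pos.2 hn
  ext x
  simp only [gridIoo, mem_image, mem_ofPred_eq, ← Int.preimage_Ioo, mem_preimage,
    ← div_mem_Ioo_iff hn']
  constructor
  · rintro ⟨ℓ, rfl, h₁, h₂⟩
    exact ⟨ℓ, ⟨by linarith, by linarith⟩, rfl⟩
  · rintro ⟨ℓ, ⟨h₁, h₂⟩, rfl⟩
    exact ⟨ℓ, rfl, by linarith, by linarith⟩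

lemma gridIoo_finite (hn : 0 < n) : (gridIoo n c a b).Finite := by
  rw [gridIoo_eq_image hn]
  exact (finite_Ioo _ _).image _

lemma ncard_gridIoo_lt (hn : 0 < n) (hab : a ≤ b) :
    ((gridIoo n c a b).ncard : ℝ) < n * (b - a) + 1 := by
  rw [gridIoo_eq_image hn]
  calc (((fun ℓ : ℤ => (ℓ : ℝ) / n + c) '' Ioo ⌊(a - c) * n⌋ ⌈(b - c) * n⌉).ncard : ℝ)
      ≤ (Ioo ⌊(a - c) * n⌋ ⌈(b - c) * n⌉ : Set ℤ).ncard := by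
        exact_mod_cast ncard_image_le (finite_Ioo _ _)
    _ < (b - c) * n - (a - c) * n + 1 := Int.ncard_Ioo_floor_ceil_lt (by gcongr)
    _ = n * (b - a) + 1 := by ring

end Grid

def coverageSet (n : ℕ) (ε θ : ℝ) : Set ℤ := {m : ℤ | |(m : ℝ) / n - θ| < ε}

section Coverage
variable {n : ℕ} {ε p θ q : ℝ}

lemma coverageSet_eq_Icc (hn : 0 < n) :
    coverageSet n ε θ = Icc (⌊(θ - ε) * n⌋ + 1) (⌈(θ + ε) * n⌉ - 1) := by
  ext m
  rw [Icc_add_one_sub_one_eq_Ioo, ← Int.preimage_Ioo, mem_preimage,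
    ← div_mem_Ioo_iff (Nat.cast_pos.2 hn)]
  simp only [coverageSet, mem_ofPred_eq, abs_sub_lt_iff, mem_Ioo]
  constructor <;> rintro ⟨h₁, h₂⟩ <;> constructor <;> linarith

lemma coverageSet_subset_of_left_gap (hpθ : p ≤ θ) (hgap : ∀ ℓ : ℤ, (ℓ : ℝ) / n + ε ∉ Ioc p θ) :
    coverageSet n ε p ⊆ coverageSet n ε θ := by
  intro m hm
  simp only [coverageSet, mem_ofPred_eq, abs_sub_lt_iff] at hm ⊢
  refine ⟨by linarith, ?_⟩
  by_contra! h
  exact hgap m ⟨by linarith, by linarith⟩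

lemma coverageSet_subset_of_right_gap (hθq : θ ≤ q) (hgap : ∀ ℓ : ℤ, (ℓ : ℝ) / n - ε ∉ Ico θ q) :
    coverageSet n ε q ⊆ coverageSet n ε θ := by
  intro m hm
  simp only [coverageSet, mem_ofPred_eq, abs_sub_lt_iff] at hm ⊢
  refine ⟨?_, by linarith⟩
  by_contra! h
  exact hgap m ⟨by linarith, by linarith⟩

lemma min_coverage_le_of_gaps (hn : 0 < n) {a b : ℝ} (μ : ℝ → Measure ℤ)
    [IsFiniteMeasure (μ p)] [IsFiniteMeasure (μ q)]
    (hunim : ∀ k l : ℤ, UnimodalOn (fun t => (μ t (Icc k l)).toReal) a b)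
    (hap : a ≤ p) (hpθ : p ≤ θ) (hθq : θ ≤ q) (hqb : q ≤ b)
    (hgap_left : ∀ ℓ : ℤ, (ℓ : ℝ) / n + ε ∉ Ioc p θ)
    (hgap_right : ∀ ℓ : ℤ, (ℓ : ℝ) / n - ε ∉ Ico θ q) :
    min (μ p (coverageSet n ε p)).toReal (μ q (coverageSet n ε q)).toReal
      ≤ (μ θ (coverageSet n ε θ)).toReal := by
  set I := coverageSet n ε θ with hI
  have hp : (μ p (coverageSet n ε p)).toReal ≤ (μ p I).toReal :=
    ENNReal.toReal_mono (measure_ne_top _ _)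
      (measure_mono (coverageSet_subset_of_left_gap hpθ hgap_left))
  have hq : (μ q (coverageSet n ε q)).toReal ≤ (μ q I).toReal :=
    ENNReal.toReal_mono (measure_ne_top _ _)
      (measure_mono (coverageSet_subset_of_right_gap hθq hgap_right))
  rw [coverageSet_eq_Icc hn] at hI
  calc _ ≤ min (μ p I).toReal (μ q I).toReal := min_le_min hp hq
    _ ≤ (μ θ I).toReal := by
      rw [hI]; exact (hunim _ _).min_le hap hpθ hθq hqb

end Coverage

lemma Set.Finite.exists_neighbours_of_notMem {α : Type*} [LinearOrder α] {S : Set α}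
    (hS : S.Finite) {a b θ : α} (ha : a ∈ S) (hb : b ∈ S) (hθ : θ ∈ Icc a b) (hθS : θ ∉ S) :
    ∃ p ∈ S, ∃ q ∈ S, a ≤ p ∧ p < θ ∧ θ < q ∧ q ≤ b ∧ ∀ s ∈ S, s ∉ Ioo p q := by
  obtain ⟨p, ⟨hpS, hpθ⟩, hpmax⟩ :=
    exists_max_image (S ∩ Iic θ) id (hS.inter_of_left _) ⟨a, ha, hθ.1⟩
  obtain ⟨q, ⟨hqS, hθq⟩, hqmin⟩ :=
    exists_min_image (S ∩ Ici θ) id (hS.inter_of_left _) ⟨b, hb, hθ.2⟩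
  have hpθ' : p < θ := lt_of_le_of_ne hpθ (by rintro rfl; exact hθS hpS)
  have hθq' : θ < q := lt_of_le_of_ne' hθq (by rintro rfl; exact hθS hqS)
  refine ⟨p, hpS, q, hqS, hpmax a ⟨ha, hθ.1⟩, hpθ', hθq', hqmin b ⟨hb, hθ.2⟩, ?_⟩
  rintro s hs ⟨hps, hsq⟩
  rcases le_total s θ with hsθ | hθs
  · exact (hpmax s ⟨hs, hsθ⟩).not_gt hps
  · exact (hqmin s ⟨hs, hθs⟩).not_gt hsq

def breakpoints (n : ℕ) (ε a b : ℝ) : Set ℝ := {a, b} ∪ gridIoo n ε a b ∪ gridIoo n (-ε) a b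

section Breakpoints
variable {n : ℕ} {ε a b : ℝ}

lemma left_mem_breakpoints : a ∈ breakpoints n ε a b := Or.inl (Or.inl (Or.inl rfl))

lemma right_mem_breakpoints : b ∈ breakpoints n ε a b := Or.inl (Or.inl (Or.inr rfl))

lemma breakpoints_finite (hn : 0 < n) : (breakpoints n ε a b).Finite :=
  ((toFinite _).union (gridIoo_finite hn)).union (gridIoo_finite hn)

lemma ncard_breakpoints_lt (hn : 0 < n) (hab : a ≤ b) :
    ((breakpoints n ε a b).ncard : ℝ) < 2 * n * (b - a) + 4 := by
  have hpair : ({a, b} : Set ℝ).ncard ≤ 2 := by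
    simpa using ncard_insert_le a ({b} : Set ℝ)
  have hunion : (breakpoints n ε a b).ncard
      ≤ 2 + (gridIoo n ε a b).ncard + (gridIoo n (-ε) a b).ncard :=
    (ncard_union_le _ _).trans (by gcongr; exact (ncard_union_le _ _).trans (by gcongr))
  have h₁ := ncard_gridIoo_lt (c := ε) hn hab
  have h₂ := ncard_gridIoo_lt (c := -ε) hn hab
  have : ((breakpoints n ε a b).ncard : ℝ)
      ≤ 2 + (gridIoo n ε a b).ncard + (gridIoo n (-ε) a b).ncard := by exact_mod_cast hunion
  linarith

lemma exists_mem_breakpoints_coverage_le (hn : 0 < n) (μ : ℝ → Measure ℤ)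
    (hfin : ∀ θ ∈ Icc a b, IsFiniteMeasure (μ θ))
    (hunim : ∀ k l : ℤ, UnimodalOn (fun t => (μ t (Icc k l)).toReal) a b)
    {θ : ℝ} (hθ : θ ∈ Icc a b) :
    ∃ s ∈ breakpoints n ε a b,
      (μ s (coverageSet n ε s)).toReal ≤ (μ θ (coverageSet n ε θ)).toReal := by
  by_cases hθS : θ ∈ breakpoints n ε a b
  · exact ⟨θ, hθS, le_rfl⟩
  obtain ⟨p, hpS, q, hqS, hap, hpθ, hθq, hqb, hempty⟩ :=
    (breakpoints_finite hn).exists_neighbours_of_notMem left_mem_breakpoints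
      right_mem_breakpoints hθ hθS
  have hgap_left : ∀ ℓ : ℤ, (ℓ : ℝ) / n + ε ∉ Ioc p θ := fun ℓ ⟨h₁, h₂⟩ =>
    hempty _ (Or.inl (Or.inr ⟨ℓ, rfl, by linarith, by linarith⟩)) ⟨h₁, by linarith⟩
  have hgap_right : ∀ ℓ : ℤ, (ℓ : ℝ) / n - ε ∉ Ico θ q := fun ℓ ⟨h₁, h₂⟩ =>
    hempty _ (Or.inr ⟨ℓ, sub_eq_add_neg _ _, by linarith, by linarith⟩) ⟨by linarith, h₂⟩
  have := hfin p ⟨hap, by linarith [hθ.2]⟩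
  have := hfin q ⟨by linarith [hθ.1], hqb⟩
  rcases min_le_iff.1 (min_coverage_le_of_gaps hn μ hunim hap hpθ.le hθq.le hqb hgap_left
    hgap_right) with h | h
  · exact ⟨p, hpS, h⟩
  · exact ⟨q, hqS, h⟩

end Breakpoints

theorem coverage_min_absolute_error_general
    (n : ℕ) (hn : 0 < n) (ε : ℝ)
    (a b : ℝ) (hab : a < b)
    (μ : ℝ → Measure ℤ)
    (hprob : ∀ θ ∈ Icc a b, IsProbabilityMeasure (μ θ))
    (hunim : ∀ k l : ℤ, k ≤ l → ∃ x ∈ Icc a b,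
      MonotoneOn (fun θ => (μ θ {m : ℤ | k ≤ m ∧ m ≤ l}).toReal) (Icc a x) ∧
      AntitoneOn (fun θ => (μ θ {m : ℤ | k ≤ m ∧ m ≤ l}).toReal) (Icc x b)) :
    let C : ℝ → ℝ := fun θ => (μ θ {m : ℤ | |(m : ℝ) / n - θ| < ε}).toReal
    let S : Set ℝ := {a, b} ∪ {x : ℝ | ∃ ℓ : ℤ, x = (ℓ : ℝ) / n + ε ∧ x ∈ Ioo a b}
      ∪ {x : ℝ | ∃ ℓ : ℤ, x = (ℓ : ℝ) / n - ε ∧ x ∈ Ioo a b}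
    S.Finite ∧ (S.ncard : ℝ) < 2 * n * (b - a) + 4 ∧
      ∃ θ₀ ∈ S, ∀ θ ∈ Icc a b, C θ₀ ≤ C θ := by
  intro C S
  have hS : S = breakpoints n ε a b := by rw [breakpoints, gridIoo_neg]; rfl
  have hunim' : ∀ k l : ℤ, UnimodalOn (fun θ => (μ θ (Icc k l)).toReal) a b := by
    intro k l
    rcases le_or_gt k l with hkl | hlk
    · exact hunim k l hkl
    · simpa [Icc_eq_empty_of_lt hlk] using unimodalOn_const hab.le (0 : ℝ)
  rw [hS]
  have hfin := breakpoints_finite (ε := ε) (a := a) (b := b) hn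
  refine ⟨hfin, ncard_breakpoints_lt hn hab.le, ?_⟩
  obtain ⟨θ₀, hθ₀, hmin⟩ := exists_min_image _ C hfin ⟨a, left_mem_breakpoints⟩
  refine ⟨θ₀, hθ₀, fun θ hθ => ?_⟩
  obtain ⟨s, hs, hsθ⟩ := exists_mem_breakpoints_coverage_le hn μ
    (fun t ht => have := hprob t ht; inferInstance) hunim' hθ
  exact (hmin s hs).trans hsθ

/-- Exact minimization of coverage probability for absolute error control
(Theorem 1 of Chen & Chen): under continuity and unimodality of interval
probabilities, the minimum of the coverage probability
`C(θ) = P(|Y_n/n − θ| < ε | θ)` over `θ ∈ [a,b]` is attained on the finite set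
`{a,b} ∪ {ℓ/n + ε ∈ (a,b)} ∪ {ℓ/n − ε ∈ (a,b)}`, which has fewer than
`2n(b−a) + 4` elements. -/
theorem coverage_min_absolute_error
    (n : ℕ) (hn : 0 < n) (ε : ℝ) (hε : 0 < ε)
    (a b : ℝ) (ha : 0 ≤ a) (hab : a < b)
    (μ : ℝ → Measure ℤ)
    (hprob : ∀ θ ∈ Icc a b, IsProbabilityMeasure (μ θ))
    (hcont : ∀ k l : ℤ, k ≤ l →
      ContinuousOn (fun θ => (μ θ {m : ℤ | k ≤ m ∧ m ≤ l}).toReal) (Icc a b))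
    (hunim : ∀ k l : ℤ, k ≤ l → ∃ x ∈ Icc a b,
      MonotoneOn (fun θ => (μ θ {m : ℤ | k ≤ m ∧ m ≤ l}).toReal) (Icc a x) ∧
      AntitoneOn (fun θ => (μ θ {m : ℤ | k ≤ m ∧ m ≤ l}).toReal) (Icc x b)) :
    let C : ℝ → ℝ := fun θ => (μ θ {m : ℤ | |(m : ℝ) / n - θ| < ε}).toReal
    let S : Set ℝ := {a, b} ∪ {x : ℝ | ∃ ℓ : ℤ, x = (ℓ : ℝ) / n + ε ∧ x ∈ Ioo a b}
      ∪ {x : ℝ | ∃ ℓ : ℤ, x = (ℓ : ℝ) / n - ε ∧ x ∈ Ioo a b}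
    S.Finite ∧ (S.ncard : ℝ) < 2 * n * (b - a) + 4 ∧
      ∃ θ₀ ∈ S, ∀ θ ∈ Icc a b, C θ₀ ≤ C θ :=
  coverage_min_absolute_error_general n hn ε a b hab μ hprob hunim
end

section
/- Fix a positive integer n, a real number ε with 0 < ε < 1, reals a, b with 0 < a < b, and a family of probability measures μ_θ on ℤ for θ ∈ [a,b] such that for all integers k ≤ l, the map θ ↦ μ_θ({m ∈ ℤ : k ≤ m ≤ l}) is continuous and unimodal on [a,b]. Define the coverage probability C(θ) = μ_θ({m ∈ ℤ : |m/n − θ| < ε·θ}). Then the infimum of C over [a,b] is attained, and it is attained at some point of the finite set S = {a, b} ∪ {ℓ/(n(1+ε)) : ℓ ∈ ℤ, ℓ/(n(1+ε)) ∈ (a,b)} ∪ {ℓ/(n(1−ε)) : ℓ ∈ ℤ, ℓ/(n(1−ε)) ∈ (a,b)}; moreover S has fewer than 2n(b−a) + 4 elements. -/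
open MeasureTheory Set

/-!
The coverage event `{m : |m/n - θ| < εθ}` consists of the integers in the open interval
`(n(1-ε)θ, n(1+ε)θ)`. The points of `S` other than `a`, `b` are exactly where one of these two endpoints crosses an
integer. So if `u < v` are consecutive points of `S` and `u < θ < v`, the event at `θ` is an integer
interval `[k, l]` containing the events at `u` and at `v`. By unimodality `μ_θ [k, l]` is at least
`μ_u [k, l]` or `μ_v [k, l]`, hence `C θ ≥ min (C u) (C v)`, and the minimum of `C` over the finite
set `S` is its minimum over `[a, b]`.
-/

def gridPoints (c a b : ℝ) : Set ℝ := {x : ℝ | ∃ ℓ : ℤ, x = (ℓ : ℝ) / c ∧ x ∈ Ioo a b}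

section gridPoints

variable {c a b : ℝ}

lemma gridPoints_subset_image (hc : 0 < c) :
    gridPoints c a b ⊆ (fun ℓ : ℤ => (ℓ : ℝ) / c) '' Ioo ⌊c * a⌋ ⌈c * b⌉ := by
  rintro _ ⟨ℓ, rfl, hℓa, hℓb⟩
  refine ⟨ℓ, ⟨Int.floor_lt.2 ?_, Int.lt_ceil.2 ?_⟩, rfl⟩
  · rwa [lt_div_iff₀ hc, mul_comm] at hℓa
  · rwa [div_lt_iff₀ hc, mul_comm] at hℓb

lemma gridPoints_finite (hc : 0 < c) : (gridPoints c a b).Finite :=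
  ((finite_Ioo _ _).image _).subset (gridPoints_subset_image hc)

lemma ncard_gridPoints_lt (hc : 0 < c) (hab : a ≤ b) :
    ((gridPoints c a b).ncard : ℝ) < c * (b - a) + 1 := by
  have hle : (gridPoints c a b).ncard ≤ (⌈c * b⌉ - ⌊c * a⌋ - 1).toNat :=
    calc (gridPoints c a b).ncard
        ≤ ((fun ℓ : ℤ => (ℓ : ℝ) / c) '' Ioo ⌊c * a⌋ ⌈c * b⌉).ncard :=
          ncard_le_ncard (gridPoints_subset_image hc) ((finite_Ioo _ _).image _)
      _ ≤ (Ioo ⌊c * a⌋ ⌈c * b⌉).ncard := ncard_image_le (finite_Ioo _ _)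
      _ = _ := by rw [← Finset.coe_Ioo, ncard_coe_finset, Int.card_Ioo]
  have htoNat : ((⌈c * b⌉ - ⌊c * a⌋ - 1).toNat : ℝ) = max ((⌈c * b⌉ : ℝ) - ⌊c * a⌋ - 1) 0 := by
    exact_mod_cast Int.toNat_eq_max _
  have hceil := Int.ceil_lt_add_one (c * b)
  have hfloor := Int.sub_one_lt_floor (c * a)
  have hpos : 0 ≤ c * (b - a) := mul_nonneg hc.le (sub_nonneg.2 hab)
  calc ((gridPoints c a b).ncard : ℝ) ≤ ((⌈c * b⌉ - ⌊c * a⌋ - 1).toNat : ℝ) := by exact_mod_cast hle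
    _ < c * (b - a) + 1 := by
      rw [htoNat]
      exact max_lt (by linarith) (by linarith)

lemma int_le_or_le_of_gridPoints_gap {u v : ℝ} (hc : 0 < c) (hau : a ≤ u) (hvb : v ≤ b)
    (hgap : ∀ x ∈ gridPoints c a b, x ∉ Ioo u v) (m : ℤ) : (m : ℝ) ≤ c * u ∨ c * v ≤ m := by
  by_contra! h
  have hu : u < m / c := by rw [lt_div_iff₀ hc]; linarith [h.1]
  have hv : m / c < v := by rw [div_lt_iff₀ hc]; linarith [h.2]
  exact hgap _ ⟨m, rfl, hau.trans_lt hu, hv.trans_le hvb⟩ ⟨hu, hv⟩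

end gridPoints

lemma ncard_pair_union_gridPoints_lt {c₁ c₂ a b : ℝ} (hc₁ : 0 < c₁) (hc₂ : 0 < c₂) (hab : a ≤ b) :
    (({a, b} ∪ gridPoints c₁ a b ∪ gridPoints c₂ a b).ncard : ℝ) < (c₁ + c₂) * (b - a) + 4 := by
  have hle : ({a, b} ∪ gridPoints c₁ a b ∪ gridPoints c₂ a b).ncard
      ≤ 2 + (gridPoints c₁ a b).ncard + (gridPoints c₂ a b).ncard :=
    (ncard_union_le _ _).trans <| Nat.add_le_add_right
      ((ncard_union_le _ _).trans (Nat.add_le_add_right ((ncard_insert_le a {b}).trans_eq (by rw [ncard_singleton])) _)) _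
  have h₁ := ncard_gridPoints_lt hc₁ hab
  have h₂ := ncard_gridPoints_lt hc₂ hab
  calc _ ≤ (2 + (gridPoints c₁ a b).ncard + (gridPoints c₂ a b).ncard : ℝ) := by exact_mod_cast hle
    _ < _ := by linarith

lemma abs_div_sub_lt_mul_iff {x c ψ ε : ℝ} (hc : 0 < c) :
    |x / c - ψ| < ε * ψ ↔ c * (1 - ε) * ψ < x ∧ x < c * (1 + ε) * ψ := by
  rw [abs_lt, lt_sub_iff_add_lt, sub_lt_iff_lt_add, lt_div_iff₀ hc, div_lt_iff₀ hc]
  constructor <;> rintro ⟨h₁, h₂⟩ <;> constructor <;> linarith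

lemma setOf_int_lt_lt_eq (p q : ℝ) :
    {m : ℤ | p < m ∧ (m : ℝ) < q} = {m : ℤ | ⌊p⌋ + 1 ≤ m ∧ m ≤ ⌈q⌉ - 1} := by
  ext m
  simp only [mem_ofPred_eq, ← Int.floor_lt, ← Int.lt_ceil]
  omega

lemma setOf_int_lt_lt_subset_of_gap {c₁ c₂ u θ v : ℝ} (hc₁ : 0 < c₁) (hc₂ : 0 < c₂)
    (huθ : u < θ) (hθv : θ < v)
    (hgap₁ : ∀ m : ℤ, (m : ℝ) ≤ c₁ * u ∨ c₁ * v ≤ m) (hgap₂ : ∀ m : ℤ, (m : ℝ) ≤ c₂ * u ∨ c₂ * v ≤ m) :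
    {m : ℤ | c₁ * u < m ∧ (m : ℝ) < c₂ * u} ⊆ {m : ℤ | c₁ * θ < m ∧ (m : ℝ) < c₂ * θ} ∧
      {m : ℤ | c₁ * v < m ∧ (m : ℝ) < c₂ * v} ⊆ {m : ℤ | c₁ * θ < m ∧ (m : ℝ) < c₂ * θ} := by
  have hθ₁ : c₁ * θ < c₁ * v := mul_lt_mul_of_pos_left hθv hc₁
  have hθ₂ : c₂ * u < c₂ * θ := mul_lt_mul_of_pos_left huθ hc₂
  refine ⟨fun m ⟨hm₁, hm₂⟩ => ⟨?_, hm₂.trans hθ₂⟩, fun m ⟨hm₁, hm₂⟩ => ⟨hθ₁.trans hm₁, ?_⟩⟩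
  · rcases hgap₁ m with h | h <;> linarith
  · rcases hgap₂ m with h | h <;> linarith

lemma le_or_le_of_monotoneOn_antitoneOn {α β : Type*} [LinearOrder α] [Preorder β] {f : α → β}
    {a b x u θ v : α} (hmono : MonotoneOn f (Icc a x)) (hanti : AntitoneOn f (Icc x b))
    (hau : a ≤ u) (huθ : u ≤ θ) (hθv : θ ≤ v) (hvb : v ≤ b) : f u ≤ f θ ∨ f v ≤ f θ := by
  rcases le_total θ x with hθx | hxθ
  · exact Or.inl (hmono ⟨hau, huθ.trans hθx⟩ ⟨hau.trans huθ, hθx⟩ huθ)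
  · exact Or.inr (hanti ⟨hxθ, hθv.trans hvb⟩ ⟨hxθ.trans hθv, hvb⟩ hθv)

lemma measure_le_or_le_of_subset_Icc {μ : ℝ → Measure ℤ} {a b u θ v : ℝ}
    [IsFiniteMeasure (μ u)] [IsFiniteMeasure (μ v)]
    (hunim : ∀ k l : ℤ, k ≤ l → ∃ x ∈ Icc a b,
      MonotoneOn (fun θ => (μ θ {m : ℤ | k ≤ m ∧ m ≤ l}).toReal) (Icc a x) ∧
      AntitoneOn (fun θ => (μ θ {m : ℤ | k ≤ m ∧ m ≤ l}).toReal) (Icc x b))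
    (hau : a ≤ u) (huθ : u ≤ θ) (hθv : θ ≤ v) (hvb : v ≤ b) {k l : ℤ} {A B : Set ℤ}
    (hA : A ⊆ {m | k ≤ m ∧ m ≤ l}) (hB : B ⊆ {m | k ≤ m ∧ m ≤ l}) :
    (μ u A).toReal ≤ (μ θ {m | k ≤ m ∧ m ≤ l}).toReal ∨
      (μ v B).toReal ≤ (μ θ {m | k ≤ m ∧ m ≤ l}).toReal := by
  by_cases hkl : k ≤ l
  · obtain ⟨x, -, hmono, hanti⟩ := hunim k l hkl
    refine (le_or_le_of_monotoneOn_antitoneOn hmono hanti hau huθ hθv hvb).imp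
      (le_trans ?_) (le_trans ?_) <;>
      exact ENNReal.toReal_mono (measure_ne_top _ _) (measure_mono ‹_›)
  · have hempty : A = ∅ := eq_empty_of_subset_empty fun m hm => hkl ((hA hm).1.trans (hA hm).2)
    simp [hempty]

theorem exists_forall_le_of_le_or_le_of_gap {α β : Type*} [LinearOrder α] [LinearOrder β]
    {f : α → β} {S : Set α} {a b : α} (hS : S.Finite) (ha : a ∈ S) (hb : b ∈ S)
    (hgap : ∀ u ∈ S, ∀ v ∈ S, ∀ θ ∈ Ioo u v, (∀ x ∈ S, x ∉ Ioo u v) → f u ≤ f θ ∨ f v ≤ f θ) :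
    ∃ θ₀ ∈ S, ∀ θ ∈ Icc a b, f θ₀ ≤ f θ := by
  obtain ⟨θ₀, hθ₀, hmin⟩ := exists_min_image S f hS ⟨a, ha⟩
  refine ⟨θ₀, hθ₀, fun θ hθ => ?_⟩
  by_cases hθS : θ ∈ S
  · exact hmin θ hθS
  obtain ⟨u, ⟨hu, huθ⟩, humax⟩ := exists_max_image (S ∩ Iio θ) id (hS.inter_of_left _)
    ⟨a, ha, hθ.1.lt_of_ne (by rintro rfl; exact hθS ha)⟩
  obtain ⟨v, ⟨hv, hθv⟩, hvmin⟩ := exists_min_image (S ∩ Ioi θ) id (hS.inter_of_left _)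
    ⟨b, hb, hθ.2.lt_of_ne (by rintro rfl; exact hθS hb)⟩
  have hempty : ∀ x ∈ S, x ∉ Ioo u v := by
    rintro x hx ⟨hux, hxv⟩
    rcases lt_trichotomy x θ with hxθ | rfl | hθx
    · exact (humax x ⟨hx, hxθ⟩).not_gt hux
    · exact hθS hx
    · exact (hvmin x ⟨hx, hθx⟩).not_gt hxv
  rcases hgap u hu v hv θ ⟨huθ, hθv⟩ hempty with h | h
  · exact (hmin u hu).trans h
  · exact (hmin v hv).trans h

theorem coverage_min_relative_error_general
    (n : ℕ) (hn : 0 < n) (ε : ℝ) (hε0 : 0 < ε) (hε1 : ε < 1)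
    (a b : ℝ) (hab : a < b)
    (μ : ℝ → Measure ℤ)
    (hprob : ∀ θ ∈ Icc a b, IsProbabilityMeasure (μ θ))
    (hunim : ∀ k l : ℤ, k ≤ l → ∃ x ∈ Icc a b,
      MonotoneOn (fun θ => (μ θ {m : ℤ | k ≤ m ∧ m ≤ l}).toReal) (Icc a x) ∧
      AntitoneOn (fun θ => (μ θ {m : ℤ | k ≤ m ∧ m ≤ l}).toReal) (Icc x b)) :
    let C : ℝ → ℝ := fun θ => (μ θ {m : ℤ | |(m : ℝ) / n - θ| < ε * θ}).toReal
    let S : Set ℝ := {a, b}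
      ∪ {x : ℝ | ∃ ℓ : ℤ, x = (ℓ : ℝ) / (n * (1 + ε)) ∧ x ∈ Ioo a b}
      ∪ {x : ℝ | ∃ ℓ : ℤ, x = (ℓ : ℝ) / (n * (1 - ε)) ∧ x ∈ Ioo a b}
    S.Finite ∧ (S.ncard : ℝ) < 2 * n * (b - a) + 4 ∧
      ∃ θ₀ ∈ S, ∀ θ ∈ Icc a b, C θ₀ ≤ C θ := by
  intro C S
  have hn' : (0 : ℝ) < n := Nat.cast_pos.2 hn
  have hc₂ : (0 : ℝ) < n * (1 + ε) := by positivity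
  have hc₁ : (0 : ℝ) < n * (1 - ε) := mul_pos hn' (sub_pos.2 hε1)
  have hS : S = {a, b} ∪ gridPoints (n * (1 + ε)) a b ∪ gridPoints (n * (1 - ε)) a b := rfl
  have hSsub : S ⊆ Icc a b := by
    rintro x (((rfl | rfl) | ⟨_, -, hx⟩) | ⟨_, -, hx⟩)
    exacts [left_mem_Icc.2 hab.le, right_mem_Icc.2 hab.le, Ioo_subset_Icc_self hx,
      Ioo_subset_Icc_self hx]
  have hC : ∀ θ, C θ = (μ θ {m : ℤ | n * (1 - ε) * θ < m ∧ (m : ℝ) < n * (1 + ε) * θ}).toReal :=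
    fun θ => by simp only [C, abs_div_sub_lt_mul_iff hn']
  have hSfin : S.Finite :=
    ((toFinite _).union (gridPoints_finite hc₂)).union (gridPoints_finite hc₁)
  refine ⟨hSfin, (ncard_pair_union_gridPoints_lt hc₂ hc₁ hab.le).trans_eq (by ring),
    exists_forall_le_of_le_or_le_of_gap hSfin (by simp [hS]) (by simp [hS]) ?_⟩
  intro u hu v hv θ ⟨huθ, hθv⟩ hgap
  have := hprob u (hSsub hu)
  have := hprob v (hSsub hv)
  have hgap₁ := int_le_or_le_of_gridPoints_gap hc₁ (hSsub hu).1 (hSsub hv).2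
    fun x hx => hgap x (Or.inr hx)
  have hgap₂ := int_le_or_le_of_gridPoints_gap hc₂ (hSsub hu).1 (hSsub hv).2
    fun x hx => hgap x (Or.inl (Or.inr hx))
  obtain ⟨hsub_u, hsub_v⟩ := setOf_int_lt_lt_subset_of_gap hc₁ hc₂ huθ hθv hgap₁ hgap₂
  rw [setOf_int_lt_lt_eq (n * (1 - ε) * θ)] at hsub_u hsub_v
  simp only [hC, setOf_int_lt_lt_eq (n * (1 - ε) * θ)]
  exact measure_le_or_le_of_subset_Icc hunim (hSsub hu).1 huθ.le hθv.le (hSsub hv).2 hsub_u hsub_v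

/-- Exact minimization of coverage probability for relative error control
(Theorem 2 of Chen & Chen): under continuity and unimodality of interval
probabilities, the minimum of the coverage probability
`C(θ) = P(|Y_n/n − θ| < εθ | θ)` over `θ ∈ [a,b]` is attained on the finite set
`{a,b} ∪ {ℓ/(n(1+ε)) ∈ (a,b)} ∪ {ℓ/(n(1−ε)) ∈ (a,b)}`, which has fewer than
`2n(b−a) + 4` elements. -/
theorem coverage_min_relative_error
    (n : ℕ) (hn : 0 < n) (ε : ℝ) (hε0 : 0 < ε) (hε1 : ε < 1)
    (a b : ℝ) (ha : 0 < a) (hab : a < b)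
    (μ : ℝ → Measure ℤ)
    (hprob : ∀ θ ∈ Icc a b, IsProbabilityMeasure (μ θ))
    (hcont : ∀ k l : ℤ, k ≤ l →
      ContinuousOn (fun θ => (μ θ {m : ℤ | k ≤ m ∧ m ≤ l}).toReal) (Icc a b))
    (hunim : ∀ k l : ℤ, k ≤ l → ∃ x ∈ Icc a b,
      MonotoneOn (fun θ => (μ θ {m : ℤ | k ≤ m ∧ m ≤ l}).toReal) (Icc a x) ∧
      AntitoneOn (fun θ => (μ θ {m : ℤ | k ≤ m ∧ m ≤ l}).toReal) (Icc x b)) :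
    let C : ℝ → ℝ := fun θ => (μ θ {m : ℤ | |(m : ℝ) / n - θ| < ε * θ}).toReal
    let S : Set ℝ := {a, b}
      ∪ {x : ℝ | ∃ ℓ : ℤ, x = (ℓ : ℝ) / (n * (1 + ε)) ∧ x ∈ Ioo a b}
      ∪ {x : ℝ | ∃ ℓ : ℤ, x = (ℓ : ℝ) / (n * (1 - ε)) ∧ x ∈ Ioo a b}
    S.Finite ∧ (S.ncard : ℝ) < 2 * n * (b - a) + 4 ∧
      ∃ θ₀ ∈ S, ∀ θ ∈ Icc a b, C θ₀ ≤ C θ :=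
  coverage_min_relative_error_general n hn ε hε0 hε1 a b hab μ hprob hunim
end

section
/- Fix a positive integer n, a real ε > 0, reals a < b, and a family of probability measures μ_θ on ℤ for θ ∈ [a,b] such that for all integers k ≤ l, the map θ ↦ μ_θ({m ∈ ℤ : k ≤ m ≤ l}) is continuous on [a,b]. Define C(θ) = μ_θ({m ∈ ℤ : |m/n − θ| < ε}). Then for every θ ∈ (a,b), the one-sided limit lim_{η→0⁺} C(θ + η) exists and is ≥ C(θ), and the one-sided limit lim_{η→0⁺} C(θ − η) exists and is ≥ C(θ). -/
open MeasureTheory Set Filter Topology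

/-! The coverage set is the integer interval `[⌊n(θ-ε)⌋ + 1, ⌈n(θ+ε)⌉ - 1]`. Floor is locally
constant from the right and ceiling from the left, so as `θ' ↓ θ` the coverage set is eventually
the fixed interval `[⌊n(θ-ε)⌋ + 1, ⌊n(θ+ε)⌋]`, and as `θ' ↑ θ` it is eventually
`[⌈n(θ-ε)⌉, ⌈n(θ+ε)⌉ - 1]`. Both contain the coverage set at `θ`, and the probability of a fixed
interval is continuous in `θ`. -/

theorem Int.setOf_lt_and_lt_eq_Icc {α : Type*} [Ring α] [LinearOrder α] [FloorRing α]
    (x y : α) : {m : ℤ | x < m ∧ (m : α) < y} = Icc (⌊x⌋ + 1) (⌈y⌉ - 1) := by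
  ext m
  simp only [mem_ofPred_eq, mem_Icc, ← Int.floor_lt, ← Int.lt_ceil]
  omega

theorem exists_tendsto_measure_ge_of_eventually_eq {ι Ω : Type*} [MeasurableSpace Ω]
    {μ : ι → Measure Ω} {s : ι → Set Ω} {t : Set Ω} {l : Filter ι} {i : ι}
    [IsFiniteMeasure (μ i)] (ht : Tendsto (fun j => (μ j t).toReal) l (𝓝 (μ i t).toReal))
    (hs : ∀ᶠ j in l, s j = t) (hst : s i ⊆ t) :
    ∃ L, Tendsto (fun j => (μ j (s j)).toReal) l (𝓝 L) ∧ (μ i (s i)).toReal ≤ L :=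
  ⟨_, ht.congr' (hs.mono fun j h => congrArg (fun u => (μ j u).toReal) h.symm),
    ENNReal.toReal_mono (measure_ne_top _ _) (measure_mono hst)⟩

theorem continuousAt_measure_Icc {a b θ : ℝ} {μ : ℝ → Measure ℤ}
    (hcont : ∀ k l : ℤ, k ≤ l → ContinuousOn (fun θ => (μ θ (Icc k l)).toReal) (Icc a b))
    (hθ : θ ∈ Ioo a b) (k l : ℤ) : ContinuousAt (fun θ => (μ θ (Icc k l)).toReal) θ := by
  rcases le_or_gt k l with hkl | hlk
  · exact (hcont k l hkl).continuousAt (Icc_mem_nhds hθ.1 hθ.2)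
  · simp only [Icc_eq_empty_of_lt hlk, measure_empty, ENNReal.toReal_zero]
    exact continuousAt_const

theorem strictMono_sub_mul_natCast {n : ℕ} (hn : 0 < n) (c : ℝ) :
    StrictMono fun x : ℝ => (x - c) * n :=
  fun _ _ hxy => mul_lt_mul_of_pos_right (sub_lt_sub_right hxy c) (Nat.cast_pos.2 hn)

theorem tendsto_sub_mul_natCast_nhdsGT {n : ℕ} (hn : 0 < n) (x c : ℝ) :
    Tendsto (fun y : ℝ => (y - c) * n) (𝓝[>] x) (𝓝[>] ((x - c) * n)) :=
  (by fun_prop : Continuous fun y : ℝ => (y - c) * n).continuousWithinAt.tendsto_nhdsWithin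
    (strictMono_sub_mul_natCast hn c).mapsTo_Ioi

theorem tendsto_sub_mul_natCast_nhdsLT {n : ℕ} (hn : 0 < n) (x c : ℝ) :
    Tendsto (fun y : ℝ => (y - c) * n) (𝓝[<] x) (𝓝[<] ((x - c) * n)) :=
  (by fun_prop : Continuous fun y : ℝ => (y - c) * n).continuousWithinAt.tendsto_nhdsWithin
    (strictMono_sub_mul_natCast hn c).mapsTo_Iio

section Coverage

variable {n : ℕ} {ε θ : ℝ}

theorem setOf_abs_div_sub_lt_eq_Icc (hn : 0 < n) :
    {m : ℤ | |(m : ℝ) / n - θ| < ε} = Icc (⌊(θ - ε) * n⌋ + 1) (⌈(θ + ε) * n⌉ - 1) := by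
  have hn' : (0 : ℝ) < n := Nat.cast_pos.2 hn
  rw [← Int.setOf_lt_and_lt_eq_Icc]
  ext m
  simp only [mem_ofPred_eq, abs_sub_lt_iff, ← lt_div_iff₀ hn', ← div_lt_iff₀ hn']
  constructor <;> rintro ⟨h₁, h₂⟩ <;> constructor <;> linarith

theorem eventually_setOf_abs_div_sub_lt_eq_nhdsGT (hn : 0 < n) :
    ∀ᶠ θ' in 𝓝[>] θ,
      {m : ℤ | |(m : ℝ) / n - θ'| < ε} = Icc (⌊(θ - ε) * n⌋ + 1) ⌊(θ + ε) * n⌋ := by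
  have hfloor := tendsto_pure.1 <| (tendsto_floor_right_pure_floor _).comp <|
    (tendsto_sub_mul_natCast_nhdsGT hn θ ε).mono_right (nhdsWithin_mono _ Ioi_subset_Ici_self)
  have hceil := tendsto_pure.1 <|
    (tendsto_ceil_right_pure_floor_add_one _).comp (tendsto_sub_mul_natCast_nhdsGT hn θ (-ε))
  filter_upwards [hfloor, hceil] with θ' h₁ h₂
  simp only [Function.comp_apply, sub_neg_eq_add] at h₁ h₂
  rw [setOf_abs_div_sub_lt_eq_Icc hn, h₁, h₂, add_sub_cancel_right]

theorem eventually_setOf_abs_div_sub_lt_eq_nhdsLT (hn : 0 < n) :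
    ∀ᶠ θ' in 𝓝[<] θ,
      {m : ℤ | |(m : ℝ) / n - θ'| < ε} = Icc ⌈(θ - ε) * n⌉ (⌈(θ + ε) * n⌉ - 1) := by
  have hfloor := tendsto_pure.1 <|
    (tendsto_floor_left_pure_ceil_sub_one _).comp (tendsto_sub_mul_natCast_nhdsLT hn θ ε)
  have hceil := tendsto_pure.1 <| (tendsto_ceil_left_pure_ceil _).comp <|
    (tendsto_sub_mul_natCast_nhdsLT hn θ (-ε)).mono_right (nhdsWithin_mono _ Iio_subset_Iic_self)
  filter_upwards [hfloor, hceil] with θ' h₁ h₂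
  simp only [Function.comp_apply, sub_neg_eq_add] at h₁ h₂
  rw [setOf_abs_div_sub_lt_eq_Icc hn, h₁, h₂, sub_add_cancel]

end Coverage

theorem coverage_one_sided_limits_absolute_error_general
    (n : ℕ) (hn : 0 < n) (ε : ℝ)
    (a b : ℝ)
    (μ : ℝ → Measure ℤ)
    (hprob : ∀ θ ∈ Icc a b, IsProbabilityMeasure (μ θ))
    (hcont : ∀ k l : ℤ, k ≤ l →
      ContinuousOn (fun θ => (μ θ {m : ℤ | k ≤ m ∧ m ≤ l}).toReal) (Icc a b)) :
    let C : ℝ → ℝ := fun θ => (μ θ {m : ℤ | |(m : ℝ) / n - θ| < ε}).toReal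
    ∀ θ ∈ Ioo a b,
      (∃ L : ℝ, Tendsto C (nhdsWithin θ (Ioi θ)) (nhds L) ∧ C θ ≤ L) ∧
      (∃ L : ℝ, Tendsto C (nhdsWithin θ (Iio θ)) (nhds L) ∧ C θ ≤ L) := by
  intro C θ hθ
  have := hprob θ (Ioo_subset_Icc_self hθ)
  have hI := continuousAt_measure_Icc hcont hθ
  constructor
  · refine exists_tendsto_measure_ge_of_eventually_eq
      ((hI _ _).tendsto.mono_left nhdsWithin_le_nhds)
      (eventually_setOf_abs_div_sub_lt_eq_nhdsGT hn) ?_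
    rw [setOf_abs_div_sub_lt_eq_Icc hn]
    exact Icc_subset_Icc_right (by linarith [Int.ceil_le_floor_add_one ((θ + ε) * n)])
  · refine exists_tendsto_measure_ge_of_eventually_eq
      ((hI _ _).tendsto.mono_left nhdsWithin_le_nhds)
      (eventually_setOf_abs_div_sub_lt_eq_nhdsLT hn) ?_
    rw [setOf_abs_div_sub_lt_eq_Icc hn]
    exact Icc_subset_Icc_left (by linarith [Int.ceil_le_floor_add_one ((θ - ε) * n)])

/-- Lemma 4 of Chen & Chen: if for all integers `k ≤ l` the interval
probability `θ ↦ μ_θ{k ≤ m ≤ l}` is continuous on `[a,b]`, then the coverage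
probability `C(θ) = μ_θ{|m/n − θ| < ε}` has one-sided limits from the right
and from the left at every `θ ∈ (a,b)`, both of which are `≥ C(θ)`. -/
theorem coverage_one_sided_limits_absolute_error
    (n : ℕ) (hn : 0 < n) (ε : ℝ) (hε : 0 < ε)
    (a b : ℝ) (hab : a < b)
    (μ : ℝ → Measure ℤ)
    (hprob : ∀ θ ∈ Icc a b, IsProbabilityMeasure (μ θ))
    (hcont : ∀ k l : ℤ, k ≤ l →
      ContinuousOn (fun θ => (μ θ {m : ℤ | k ≤ m ∧ m ≤ l}).toReal) (Icc a b)) :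
    let C : ℝ → ℝ := fun θ => (μ θ {m : ℤ | |(m : ℝ) / n - θ| < ε}).toReal
    ∀ θ ∈ Ioo a b,
      (∃ L : ℝ, Tendsto C (nhdsWithin θ (Ioi θ)) (nhds L) ∧ C θ ≤ L) ∧
      (∃ L : ℝ, Tendsto C (nhdsWithin θ (Iio θ)) (nhds L) ∧ C θ ≤ L) :=
  coverage_one_sided_limits_absolute_error_general n hn ε a b μ hprob hcont
end

section
/- Fix a positive integer n, a real ε > 0, reals 0 ≤ a < b, and a family of probability measures μ_θ on ℤ for θ ∈ [a,b] such that for all integers k ≤ l, the map θ ↦ μ_θ({m ∈ ℤ : k ≤ m ≤ l}) is continuous and unimodal on [a,b]. Define C(θ) = μ_θ({m ∈ ℤ : |m/n − θ| < ε}). Let α < β be two elements of [a,b] such that there is no integer ℓ with α < ℓ/n + ε < β and no integer ℓ with α < ℓ/n − ε < β. Then C(θ) ≥ min{C(α), C(β)} for every θ ∈ (α, β). -/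
/-!
Between two consecutive grid points the coverage set `{m : |m/n - θ| < ε}` does not move: for
every `θ ∈ (α, β)` it is the fixed integer interval `I = {m : β - ε ≤ m/n ≤ α + ε}`, which also
contains the coverage sets at `α` and `β`. Hence `C(θ) = μ_θ(I)`, while `C(α) ≤ μ_α(I)` and
`C(β) ≤ μ_β(I)`, and unimodality of `θ ↦ μ_θ(I)` gives `μ_θ(I) ≥ min (μ_α(I)) (μ_β(I))`.
-/

open MeasureTheory Set

lemma min_le_of_monotoneOn_of_antitoneOn {ι κ : Type*} [LinearOrder ι] [LinearOrder κ]
    {f : ι → κ} {a x b s θ t : ι} (hmono : MonotoneOn f (Icc a x))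
    (hanti : AntitoneOn f (Icc x b)) (has : a ≤ s) (hsθ : s ≤ θ) (hθt : θ ≤ t) (htb : t ≤ b) :
    min (f s) (f t) ≤ f θ := by
  rcases le_total θ x with hθx | hxθ
  · exact (min_le_left _ _).trans (hmono ⟨has, hsθ.trans hθx⟩ ⟨has.trans hsθ, hθx⟩ hsθ)
  · exact (min_le_right _ _).trans (hanti ⟨hxθ, hθt.trans htb⟩ ⟨hxθ.trans hθt, htb⟩ hθt)

section Window

variable {p ε α β θ : ℝ}

lemma le_and_le_of_abs_sub_lt (hplus : p + ε ∉ Ioo α β) (hminus : p - ε ∉ Ioo α β)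
    (hθ : θ ∈ Icc α β) (h : |p - θ| < ε) : β - ε ≤ p ∧ p ≤ α + ε := by
  rw [abs_lt] at h
  constructor
  · by_contra! hp
    exact hplus ⟨by linarith [hθ.1], by linarith⟩
  · by_contra! hp
    exact hminus ⟨by linarith, by linarith [hθ.2]⟩

lemma abs_sub_lt_iff_of_mem_Ioo (hplus : p + ε ∉ Ioo α β) (hminus : p - ε ∉ Ioo α β)
    (hθ : θ ∈ Ioo α β) : |p - θ| < ε ↔ β - ε ≤ p ∧ p ≤ α + ε := by
  refine ⟨le_and_le_of_abs_sub_lt hplus hminus (Ioo_subset_Icc_self hθ), fun ⟨hβ, hα⟩ => ?_⟩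
  rw [abs_lt]
  constructor <;> linarith [hθ.1, hθ.2]

end Window

lemma setOf_le_div_and_div_le_eq {c : ℝ} (hc : 0 < c) (x y : ℝ) :
    {m : ℤ | x ≤ m / c ∧ m / c ≤ y} = {m : ℤ | ⌈x * c⌉ ≤ m ∧ m ≤ ⌊y * c⌋} := by
  ext m
  exact and_congr (by rw [Int.ceil_le, le_div_iff₀ hc]) (by rw [Int.le_floor, div_le_iff₀ hc])

theorem coverage_lower_bound_between_consecutive_grid_points_absolute_general
    (n : ℕ) (hn : 0 < n) (ε : ℝ)
    (a b : ℝ)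
    (μ : ℝ → Measure ℤ)
    (hprob : ∀ θ ∈ Icc a b, IsProbabilityMeasure (μ θ))
    (hunim : ∀ k l : ℤ, k ≤ l → ∃ x ∈ Icc a b,
      MonotoneOn (fun θ => (μ θ {m : ℤ | k ≤ m ∧ m ≤ l}).toReal) (Icc a x) ∧
      AntitoneOn (fun θ => (μ θ {m : ℤ | k ≤ m ∧ m ≤ l}).toReal) (Icc x b))
    (α β : ℝ) (hα : α ∈ Icc a b) (hβ : β ∈ Icc a b)
    (h1 : ¬∃ ℓ : ℤ, α < (ℓ : ℝ) / n + ε ∧ (ℓ : ℝ) / n + ε < β)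
    (h2 : ¬∃ ℓ : ℤ, α < (ℓ : ℝ) / n - ε ∧ (ℓ : ℝ) / n - ε < β) :
    let C : ℝ → ℝ := fun θ => (μ θ {m : ℤ | |(m : ℝ) / n - θ| < ε}).toReal
    ∀ θ ∈ Ioo α β, min (C α) (C β) ≤ C θ := by
  intro C θ hθ
  have hplus (m : ℤ) : (m : ℝ) / n + ε ∉ Ioo α β := fun h => h1 ⟨m, h⟩
  have hminus (m : ℤ) : (m : ℝ) / n - ε ∉ Ioo α β := fun h => h2 ⟨m, h⟩
  set k := ⌈(β - ε) * n⌉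
  set l := ⌊(α + ε) * n⌋
  have hwindow : {m : ℤ | β - ε ≤ m / n ∧ m / n ≤ α + ε} = {m : ℤ | k ≤ m ∧ m ≤ l} :=
    setOf_le_div_and_div_le_eq (Nat.cast_pos.2 hn) _ _
  have hsubset (t : ℝ) (ht : t ∈ Icc α β) :
      {m : ℤ | |(m : ℝ) / n - t| < ε} ⊆ {m : ℤ | k ≤ m ∧ m ≤ l} :=
    hwindow ▸ fun m => le_and_le_of_abs_sub_lt (hplus m) (hminus m) ht
  have hCθ : C θ = (μ θ {m : ℤ | k ≤ m ∧ m ≤ l}).toReal := by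
    rw [← hwindow]
    simp only [C, abs_sub_lt_iff_of_mem_Ioo (hplus _) (hminus _) hθ]
  have hC (t : ℝ) (ht : t ∈ Icc α β) (ht' : t ∈ Icc a b) :
      C t ≤ (μ t {m : ℤ | k ≤ m ∧ m ≤ l}).toReal :=
    have := hprob t ht'
    measureReal_mono (hsubset t ht)
  have hαβ : α ≤ β := (hθ.1.trans hθ.2).le
  have hCα := hC α (left_mem_Icc.2 hαβ) hα
  rcases le_or_gt k l with hkl | hlk
  · obtain ⟨x, -, hmono, hanti⟩ := hunim k l hkl
    calc min (C α) (C β)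
        ≤ min (μ α {m : ℤ | k ≤ m ∧ m ≤ l}).toReal (μ β {m : ℤ | k ≤ m ∧ m ≤ l}).toReal :=
          min_le_min hCα (hC β (right_mem_Icc.2 hαβ) hβ)
      _ ≤ C θ := hCθ ▸ min_le_of_monotoneOn_of_antitoneOn
          (f := fun t => (μ t {m : ℤ | k ≤ m ∧ m ≤ l}).toReal) hmono hanti hα.1 hθ.1.le hθ.2.le hβ.2
  · have hempty : {m : ℤ | k ≤ m ∧ m ≤ l} = ∅ := Icc_eq_empty_of_lt hlk
    rw [hempty, measure_empty, ENNReal.toReal_zero] at hCα hCθ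
    exact hCθ ▸ (min_le_left _ _).trans hCα

/-- Lemma 5 of Chen & Chen: if `α < β` in `[a,b]` are such that no grid point
`ℓ/n + ε` or `ℓ/n − ε` lies strictly between them, then the coverage
probability `C(θ) = μ_θ{|m/n − θ| < ε}` satisfies
`C(θ) ≥ min(C(α), C(β))` for all `θ ∈ (α, β)`. -/
theorem coverage_lower_bound_between_consecutive_grid_points_absolute
    (n : ℕ) (hn : 0 < n) (ε : ℝ) (hε : 0 < ε)
    (a b : ℝ) (ha : 0 ≤ a) (hab : a < b)
    (μ : ℝ → Measure ℤ)
    (hprob : ∀ θ ∈ Icc a b, IsProbabilityMeasure (μ θ))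
    (hcont : ∀ k l : ℤ, k ≤ l →
      ContinuousOn (fun θ => (μ θ {m : ℤ | k ≤ m ∧ m ≤ l}).toReal) (Icc a b))
    (hunim : ∀ k l : ℤ, k ≤ l → ∃ x ∈ Icc a b,
      MonotoneOn (fun θ => (μ θ {m : ℤ | k ≤ m ∧ m ≤ l}).toReal) (Icc a x) ∧
      AntitoneOn (fun θ => (μ θ {m : ℤ | k ≤ m ∧ m ≤ l}).toReal) (Icc x b))
    (α β : ℝ) (hα : α ∈ Icc a b) (hβ : β ∈ Icc a b) (hαβ : α < β)
    (h1 : ¬∃ ℓ : ℤ, α < (ℓ : ℝ) / n + ε ∧ (ℓ : ℝ) / n + ε < β)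
    (h2 : ¬∃ ℓ : ℤ, α < (ℓ : ℝ) / n - ε ∧ (ℓ : ℝ) / n - ε < β) :
    let C : ℝ → ℝ := fun θ => (μ θ {m : ℤ | |(m : ℝ) / n - θ| < ε}).toReal
    ∀ θ ∈ Ioo α β, min (C α) (C β) ≤ C θ :=
  coverage_lower_bound_between_consecutive_grid_points_absolute_general n hn ε a b μ hprob hunim α β
    hα hβ h1 h2
end

section
/- Fix a positive integer n, a real ε with 0 < ε < 1, reals 0 < a < b, and a family of probability measures μ_θ on ℤ for θ ∈ [a,b] such that for all integers k ≤ l, the map θ ↦ μ_θ({m ∈ ℤ : k ≤ m ≤ l}) is continuous on [a,b]. Define C(θ) = μ_θ({m ∈ ℤ : |m/n − θ| < ε·θ}). Then for every θ ∈ (a,b), the one-sided limit lim_{η→0⁺} C(θ + η) exists and is ≥ C(θ), and the one-sided limit lim_{η→0⁺} C(θ − η) exists and is ≥ C(θ). -/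
/-! For `m : ℤ`, the condition `|m/n − θ| < εθ` says `m ∈ (nθ(1−ε), nθ(1+ε))`, so the coverage
set is the integer interval `Ioo ⌊nθ(1−ε)⌋ ⌈nθ(1+ε)⌉` with strictly increasing continuous
endpoints. Floor and ceiling of such a function are eventually constant on each side of `θ`, so on
each side the coverage set is eventually one fixed integer interval containing the coverage set at
`θ`. Its probability is continuous in `θ`, which gives the one-sided limit, and monotonicity of the
measure gives the inequality. -/

open MeasureTheory Set Filter Topology

section FloorCeil

variable {α β : Type*} [Preorder α] [TopologicalSpace α]
  [Ring β] [LinearOrder β] [FloorRing β] [TopologicalSpace β]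
  [OrderClosedTopology β] {f g : α → β} {x : α}

lemma Monotone.floor_eventually_eq_right (hf : Monotone f) (hfx : ContinuousAt f x) :
    ∀ᶠ y in 𝓝[≥] x, ⌊f y⌋ = ⌊f x⌋ :=
  tendsto_pure.1 <| (tendsto_floor_right_pure_floor (f x)).comp
    (hfx.continuousWithinAt.tendsto_nhdsWithin hf.mapsTo_Ici)

lemma StrictMono.ceil_eventually_eq_right (hf : StrictMono f) (hfx : ContinuousAt f x) :
    ∀ᶠ y in 𝓝[>] x, ⌈f y⌉ = ⌊f x⌋ + 1 :=
  tendsto_pure.1 <| (tendsto_ceil_right_pure_floor_add_one (f x)).comp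
    (hfx.continuousWithinAt.tendsto_nhdsWithin hf.mapsTo_Ioi)

lemma eventually_Ioo_floor_ceil_eq_right (hf : Monotone f) (hg : StrictMono g)
    (hfx : ContinuousAt f x) (hgx : ContinuousAt g x) :
    ∀ᶠ y in 𝓝[>] x, Ioo ⌊f y⌋ ⌈g y⌉ = Ioo ⌊f x⌋ (⌊g x⌋ + 1) := by
  filter_upwards [nhdsWithin_mono x Ioi_subset_Ici_self (hf.floor_eventually_eq_right hfx),
    hg.ceil_eventually_eq_right hgx] with y hfy hgy
  rw [hfy, hgy]

variable [IsStrictOrderedRing β]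

lemma Monotone.ceil_eventually_eq_left (hf : Monotone f) (hfx : ContinuousAt f x) :
    ∀ᶠ y in 𝓝[≤] x, ⌈f y⌉ = ⌈f x⌉ :=
  tendsto_pure.1 <| (tendsto_ceil_left_pure_ceil (f x)).comp
    (hfx.continuousWithinAt.tendsto_nhdsWithin hf.mapsTo_Iic)

lemma StrictMono.floor_eventually_eq_left (hf : StrictMono f) (hfx : ContinuousAt f x) :
    ∀ᶠ y in 𝓝[<] x, ⌊f y⌋ = ⌈f x⌉ - 1 :=
  tendsto_pure.1 <| (tendsto_floor_left_pure_ceil_sub_one (f x)).comp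
    (hfx.continuousWithinAt.tendsto_nhdsWithin hf.mapsTo_Iio)

lemma eventually_Ioo_floor_ceil_eq_left (hf : StrictMono f) (hg : Monotone g)
    (hfx : ContinuousAt f x) (hgx : ContinuousAt g x) :
    ∀ᶠ y in 𝓝[<] x, Ioo ⌊f y⌋ ⌈g y⌉ = Ioo (⌈f x⌉ - 1) ⌈g x⌉ := by
  filter_upwards [hf.floor_eventually_eq_left hfx,
    nhdsWithin_mono x Iio_subset_Iic_self (hg.ceil_eventually_eq_left hgx)] with y hfy hgy
  rw [hfy, hgy]

end FloorCeil

lemma continuousOn_measure_Ioo_toReal {Θ : Type*} [TopologicalSpace Θ] {μ : Θ → Measure ℤ}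
    {s : Set Θ} (hcont : ∀ k l : ℤ, k ≤ l → ContinuousOn (fun θ => (μ θ (Icc k l)).toReal) s)
    (k l : ℤ) : ContinuousOn (fun θ => (μ θ (Ioo k l)).toReal) s := by
  rw [← Icc_add_one_sub_one_eq_Ioo]
  by_cases hkl : k + 1 ≤ l - 1
  · exact hcont _ _ hkl
  · simp only [Icc_eq_empty hkl, measure_empty, ENNReal.toReal_zero]
    exact continuousOn_const

lemma exists_tendsto_measure_toReal_ge {ι Ω : Type*} [MeasurableSpace Ω] {μ : ι → Measure Ω}
    {F : Filter ι} {x : ι} {S : ι → Set Ω} {T : Set Ω}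
    (hT : Tendsto (fun y => (μ y T).toReal) F (𝓝 (μ x T).toReal)) (hST : ∀ᶠ y in F, S y = T)
    (hsub : S x ⊆ T) (hfin : μ x T ≠ ⊤) :
    ∃ L, Tendsto (fun y => (μ y (S y)).toReal) F (𝓝 L) ∧ (μ x (S x)).toReal ≤ L :=
  ⟨_, hT.congr' (hST.mono fun y h => by simp only [h]),
    ENNReal.toReal_mono hfin (measure_mono hsub)⟩

lemma setOf_abs_div_sub_lt_eq_Ioo {n : ℕ} (hn : 0 < n) (ε θ : ℝ) :
    {m : ℤ | |(m : ℝ) / n - θ| < ε * θ} = Ioo ⌊n * θ * (1 - ε)⌋ ⌈n * θ * (1 + ε)⌉ := by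
  have hn' : (0 : ℝ) < n := Nat.cast_pos.2 hn
  rw [← Int.preimage_Ioo]
  ext m
  simp only [mem_ofPred_eq, mem_preimage, mem_Ioo, abs_sub_lt_iff]
  rw [sub_lt_iff_lt_add, div_lt_iff₀ hn', sub_lt_comm, lt_div_iff₀ hn']
  constructor <;> rintro ⟨h₁, h₂⟩ <;> constructor <;> linarith

theorem coverage_one_sided_limits_relative_error_general
    (n : ℕ) (hn : 0 < n) (ε : ℝ) (hε0 : 0 < ε) (hε1 : ε < 1)
    (a b : ℝ)
    (μ : ℝ → Measure ℤ)
    (hprob : ∀ θ ∈ Icc a b, IsProbabilityMeasure (μ θ))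
    (hcont : ∀ k l : ℤ, k ≤ l →
      ContinuousOn (fun θ => (μ θ {m : ℤ | k ≤ m ∧ m ≤ l}).toReal) (Icc a b)) :
    let C : ℝ → ℝ := fun θ => (μ θ {m : ℤ | |(m : ℝ) / n - θ| < ε * θ}).toReal
    ∀ θ ∈ Ioo a b,
      (∃ L : ℝ, Tendsto C (nhdsWithin θ (Ioi θ)) (nhds L) ∧ C θ ≤ L) ∧
      (∃ L : ℝ, Tendsto C (nhdsWithin θ (Iio θ)) (nhds L) ∧ C θ ≤ L) := by
  intro C θ hθ
  simp only [C, setOf_abs_div_sub_lt_eq_Ioo hn]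
  have hn' : (0 : ℝ) < n := Nat.cast_pos.2 hn
  have hlo : StrictMono fun t : ℝ => n * t * (1 - ε) :=
    (strictMono_mul_left_of_pos hn').mul_const (by linarith)
  have hhi : StrictMono fun t : ℝ => n * t * (1 + ε) :=
    (strictMono_mul_left_of_pos hn').mul_const (by linarith)
  have hlo_cont : Continuous fun t : ℝ => n * t * (1 - ε) := by fun_prop
  have hhi_cont : Continuous fun t : ℝ => n * t * (1 + ε) := by fun_prop
  have hlim : ∀ k l : ℤ, ∀ F ≤ 𝓝 θ,
      Tendsto (fun t => (μ t (Ioo k l)).toReal) F (𝓝 (μ θ (Ioo k l)).toReal) := fun k l F hF =>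
    (((continuousOn_measure_Ioo_toReal hcont k l).continuousAt
      (Icc_mem_nhds hθ.1 hθ.2)).tendsto).mono_left hF
  have : IsProbabilityMeasure (μ θ) := hprob θ (Ioo_subset_Icc_self hθ)
  constructor
  · exact exists_tendsto_measure_toReal_ge (hlim _ _ _ nhdsWithin_le_nhds)
      (eventually_Ioo_floor_ceil_eq_right hlo.monotone hhi
        hlo_cont.continuousAt hhi_cont.continuousAt)
      (Ioo_subset_Ioo_right (Int.ceil_le_floor_add_one _)) (measure_ne_top _ _)
  · refine exists_tendsto_measure_toReal_ge (hlim _ _ _ nhdsWithin_le_nhds)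
      (eventually_Ioo_floor_ceil_eq_left hlo hhi.monotone
        hlo_cont.continuousAt hhi_cont.continuousAt)
      (Ioo_subset_Ioo_left ?_) (measure_ne_top _ _)
    linarith [Int.ceil_le_floor_add_one (n * θ * (1 - ε))]

/-- Lemma 9 of Chen & Chen: if for all integers `k ≤ l` the interval
probability `θ ↦ μ_θ{k ≤ m ≤ l}` is continuous on `[a,b]`, then the coverage
probability `C(θ) = μ_θ{|m/n − θ| < εθ}` has one-sided limits from the right
and from the left at every `θ ∈ (a,b)`, both of which are `≥ C(θ)`. -/
theorem coverage_one_sided_limits_relative_error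
    (n : ℕ) (hn : 0 < n) (ε : ℝ) (hε0 : 0 < ε) (hε1 : ε < 1)
    (a b : ℝ) (ha : 0 < a) (hab : a < b)
    (μ : ℝ → Measure ℤ)
    (hprob : ∀ θ ∈ Icc a b, IsProbabilityMeasure (μ θ))
    (hcont : ∀ k l : ℤ, k ≤ l →
      ContinuousOn (fun θ => (μ θ {m : ℤ | k ≤ m ∧ m ≤ l}).toReal) (Icc a b)) :
    let C : ℝ → ℝ := fun θ => (μ θ {m : ℤ | |(m : ℝ) / n - θ| < ε * θ}).toReal
    ∀ θ ∈ Ioo a b,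
      (∃ L : ℝ, Tendsto C (nhdsWithin θ (Ioi θ)) (nhds L) ∧ C θ ≤ L) ∧
      (∃ L : ℝ, Tendsto C (nhdsWithin θ (Iio θ)) (nhds L) ∧ C θ ≤ L) :=
  coverage_one_sided_limits_relative_error_general n hn ε hε0 hε1 a b μ hprob hcont
end

section
/- Let 0 < a < b and 0 < ε < 1 be real numbers with a/(1−ε) ≤ b/(1+ε). For a real number x, let r(x) = min(b, max(a, x)) denote its clamp to [a,b]. Then for every real x: (i) if θ ∈ [a/(1−ε), b/(1+ε)], then |r(x) − θ| ≥ ε·θ if and only if |x − θ| ≥ ε·θ; (ii) if θ ∈ [a, a/(1−ε)), then |r(x) − θ| ≥ ε·θ if and only if x ≥ (1+ε)θ; (iii) if θ ∈ (b/(1+ε), b], then |r(x) − θ| ≥ ε·θ if and only if x ≤ (1−ε)θ. -/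
/-!
The clamp `r(x) = min b (max a x)` takes values in `[a, b]` and agrees with `x` there, so a
deviation threshold `(1 ± ε) θ` lying inside `[a, b]` is crossed by `r(x)` exactly when it is
crossed by `x`, while a threshold outside `[a, b]` is never crossed by `r(x)`. The hypothesis
`a / (1 - ε) ≤ b / (1 + ε)` places each threshold on the correct side in each of the three ranges.
-/

open Set

section Clamp

variable {α : Type*} [LinearOrder α] {a b c x : α}

theorem le_min_max_iff_of_lt_of_le (hac : a < c) (hcb : c ≤ b) :
    c ≤ min b (max a x) ↔ c ≤ x := by
  simp only [le_min_iff, le_max_iff, hcb, true_and, hac.not_ge, false_or]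

theorem min_max_le_iff_of_le_of_lt (hac : a ≤ c) (hcb : c < b) :
    min b (max a x) ≤ c ↔ x ≤ c := by
  simp only [min_le_iff, max_le_iff, hac, true_and, hcb.not_ge, false_or]

theorem lt_min_max_of_lt_of_le (hca : c < a) (hab : a ≤ b) : c < min b (max a x) :=
  lt_min (hca.trans_le hab) (lt_max_of_lt_left hca)

theorem min_max_lt_of_lt (hbc : b < c) : min b (max a x) < c :=
  (min_le_left _ _).trans_lt hbc

end Clamp

section Deviation

variable {α : Type*} [CommRing α] [LinearOrder α] [IsStrictOrderedRing α] {a b ε θ x : α}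

theorem mul_le_abs_sub_iff (ε θ y : α) :
    ε * θ ≤ |y - θ| ↔ (1 + ε) * θ ≤ y ∨ y ≤ (1 - ε) * θ := by
  rw [le_abs', or_comm]
  exact or_congr (by constructor <;> intro h <;> linarith) (by constructor <;> intro h <;> linarith)

theorem mul_le_abs_clamp_sub_iff_mul_le_abs_sub (hεθ : 0 < ε * θ)
    (hlo : a ≤ (1 - ε) * θ) (hhi : (1 + ε) * θ ≤ b) :
    ε * θ ≤ |min b (max a x) - θ| ↔ ε * θ ≤ |x - θ| := by
  have hlt : (1 - ε) * θ < (1 + ε) * θ := by linarith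
  rw [mul_le_abs_sub_iff, mul_le_abs_sub_iff,
    le_min_max_iff_of_lt_of_le (hlo.trans_lt hlt) hhi,
    min_max_le_iff_of_le_of_lt hlo (hlt.trans_le hhi)]

theorem mul_le_abs_clamp_sub_iff_add_mul_le (hlo : (1 - ε) * θ < a)
    (hmid : a < (1 + ε) * θ) (hhi : (1 + ε) * θ ≤ b) :
    ε * θ ≤ |min b (max a x) - θ| ↔ (1 + ε) * θ ≤ x := by
  rw [mul_le_abs_sub_iff, le_min_max_iff_of_lt_of_le hmid hhi,
    or_iff_left (lt_min_max_of_lt_of_le hlo (hmid.le.trans hhi)).not_ge]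

theorem mul_le_abs_clamp_sub_iff_le_sub_mul (hhi : b < (1 + ε) * θ)
    (hmid : (1 - ε) * θ < b) (hlo : a ≤ (1 - ε) * θ) :
    ε * θ ≤ |min b (max a x) - θ| ↔ x ≤ (1 - ε) * θ := by
  rw [mul_le_abs_sub_iff, min_max_le_iff_of_le_of_lt hlo hmid,
    or_iff_right (min_max_lt_of_lt hhi).not_ge]

end Deviation

theorem clamp_deviation_events_relative_wide_general
    (a b ε : ℝ) (ha : 0 < a) (hε0 : 0 < ε) (hε1 : ε < 1)
    (h : a / (1 - ε) ≤ b / (1 + ε)) :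
    ∀ x θ : ℝ,
      (θ ∈ Icc (a / (1 - ε)) (b / (1 + ε)) →
        (ε * θ ≤ |min b (max a x) - θ| ↔ ε * θ ≤ |x - θ|)) ∧
      (θ ∈ Ico a (a / (1 - ε)) →
        (ε * θ ≤ |min b (max a x) - θ| ↔ (1 + ε) * θ ≤ x)) ∧
      (θ ∈ Ioc (b / (1 + ε)) b →
        (ε * θ ≤ |min b (max a x) - θ| ↔ x ≤ (1 - ε) * θ)) := by
  intro x θ
  have hsub : 0 < 1 - ε := sub_pos.mpr hε1
  have hadd : 0 < 1 + ε := by linarith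
  have hlow : 0 < a / (1 - ε) := div_pos ha hsub
  refine ⟨fun ⟨hθa, hθb⟩ => ?_, fun ⟨hθa, hθb⟩ => ?_, fun ⟨hθb, hθle⟩ => ?_⟩
  · exact mul_le_abs_clamp_sub_iff_mul_le_abs_sub (mul_pos hε0 (hlow.trans_le hθa))
      ((div_le_iff₀' hsub).mp hθa) ((le_div_iff₀' hadd).mp hθb)
  · have hεθ : 0 < ε * θ := mul_pos hε0 (ha.trans_le hθa)
    exact mul_le_abs_clamp_sub_iff_add_mul_le ((lt_div_iff₀' hsub).mp hθb) (by linarith)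
      ((lt_div_iff₀' hadd).mp (hθb.trans_le h)).le
  · have hεθ : 0 < ε * θ := mul_pos hε0 ((hlow.trans_le h).trans hθb)
    exact mul_le_abs_clamp_sub_iff_le_sub_mul ((div_lt_iff₀' hadd).mp hθb) (by linarith)
      ((div_lt_iff₀' hsub).mp (h.trans_lt hθb)).le

/-- Lemma 13 of Chen & Chen: event identities for the deviation of the clamped
(range-preserving) estimate `r(x) = min(b, max(a, x))` under relative error,
in the case `a/(1−ε) ≤ b/(1+ε)`. -/
theorem clamp_deviation_events_relative_wide
    (a b ε : ℝ) (ha : 0 < a) (hab : a < b) (hε0 : 0 < ε) (hε1 : ε < 1)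
    (h : a / (1 - ε) ≤ b / (1 + ε)) :
    ∀ x θ : ℝ,
      (θ ∈ Icc (a / (1 - ε)) (b / (1 + ε)) →
        (ε * θ ≤ |min b (max a x) - θ| ↔ ε * θ ≤ |x - θ|)) ∧
      (θ ∈ Ico a (a / (1 - ε)) →
        (ε * θ ≤ |min b (max a x) - θ| ↔ (1 + ε) * θ ≤ x)) ∧
      (θ ∈ Ioc (b / (1 + ε)) b →
        (ε * θ ≤ |min b (max a x) - θ| ↔ x ≤ (1 - ε) * θ)) :=
  clamp_deviation_events_relative_wide_general a b ε ha hε0 hε1 h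
end
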